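/- arXiv:2003.01242 — 4 statements merged into one kernel-verified Lean document; each statement's English description precedes it below -/
import Mathlib

section
/- Population-level consistency of the calibration-weighted estimator under a linear conditional average treatment effect (Theorem 1, case (ii)): if τ(X) = γᵀ g(X) almost surely for some γ ∈ ℝ^K, and w : ℝ^p → [0,∞) is a measurable weight function whose δ-weighted g-moments are calibrated to the population, E[δ·w(X)·g(X)] = E[g(X)] (componentwise), then E[δ·w(X)·(A·Y/π_A − (1−A)·Y/(1−π_A))] = τ0. -/
/-! Under the outcome model the weighted contrast `δ (A Y / π_A - (1 - A) Y / (1 - π_A))` and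
`δ τ(X)` have the same integral against every bounded `h(X)`. Truncating `w` to `[-n, n]` and
letting `n → ∞` by dominated convergence extends this to `h = w`: both sides stay integrable,
the right one because `δ w τ(X) = γᵀ (δ w g(X))` a.s. The calibration equations then turn
`E[δ w γᵀ g(X)]` into `E[γᵀ g(X)] = τ0`. -/

open MeasureTheory Filter Topology

lemma abs_max_neg_min_le_abs {c : ℝ} (hc : 0 ≤ c) (a : ℝ) : |max (-c) (min a c)| ≤ |a| := by
  have hneg := neg_abs_le a
  rw [abs_le]
  exact ⟨le_max_of_le_right (le_min hneg ((neg_nonpos.2 (abs_nonneg a)).trans hc)),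
    max_le ((neg_nonpos.2 hc).trans (abs_nonneg a)) ((min_le_left _ _).trans (le_abs_self a))⟩

lemma abs_max_neg_min_le {c : ℝ} (hc : 0 ≤ c) (a : ℝ) : |max (-c) (min a c)| ≤ c := by
  rw [abs_le]; exact ⟨le_max_left _ _, max_le (by linarith) (min_le_right _ _)⟩

lemma tendsto_max_neg_min_natCast (a : ℝ) :
    Tendsto (fun n : ℕ => max (-(n : ℝ)) (min a n)) atTop (𝓝 a) := by
  refine tendsto_atTop_of_eventually_const (i₀ := ⌈|a|⌉₊) fun n hn => ?_
  have ha : |a| ≤ n := (Nat.le_ceil _).trans (Nat.cast_le.2 hn)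
  rw [min_eq_left (le_of_abs_le ha), max_eq_right (neg_le_of_abs_le ha)]

section

variable {Ω E : Type*} [MeasurableSpace Ω] [MeasurableSpace E] {P : Measure Ω}
  {X : Ω → E} {w : E → ℝ}

lemma tendsto_integral_mul_max_neg_min {F : Ω → ℝ} (hX : Measurable X) (hw : Measurable w)
    (hF : AEStronglyMeasurable F P) (hFw : Integrable (fun ω => F ω * w (X ω)) P) :
    Tendsto (fun n : ℕ => ∫ ω, F ω * max (-(n : ℝ)) (min (w (X ω)) n) ∂P) atTop
      (𝓝 (∫ ω, F ω * w (X ω) ∂P)) := by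
  refine tendsto_integral_of_dominated_convergence (fun ω => |F ω * w (X ω)|)
    (fun n => hF.mul
      ((measurable_const.max (hw.min measurable_const)).comp hX).aestronglyMeasurable)
    hFw.abs (fun n => ae_of_all _ fun ω => ?_)
    (ae_of_all _ fun ω => (tendsto_max_neg_min_natCast _).const_mul _)
  rw [Real.norm_eq_abs, abs_mul, abs_mul]
  exact mul_le_mul_of_nonneg_left (abs_max_neg_min_le_abs n.cast_nonneg _) (abs_nonneg _)

theorem integral_mul_comp_eq_of_forall_bounded {F G : Ω → ℝ} (hX : Measurable X)
    (hw : Measurable w) (hF : AEStronglyMeasurable F P) (hG : AEStronglyMeasurable G P)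
    (hFw : Integrable (fun ω => F ω * w (X ω)) P) (hGw : Integrable (fun ω => G ω * w (X ω)) P)
    (hFG : ∀ h : E → ℝ, Measurable h → (∃ C, ∀ x, |h x| ≤ C) →
      ∫ ω, F ω * h (X ω) ∂P = ∫ ω, G ω * h (X ω) ∂P) :
    ∫ ω, F ω * w (X ω) ∂P = ∫ ω, G ω * w (X ω) ∂P := by
  refine tendsto_nhds_unique (tendsto_integral_mul_max_neg_min hX hw hF hFw) ?_
  refine (tendsto_integral_mul_max_neg_min hX hw hG hGw).congr fun n =>
    (hFG (fun x => max (-(n : ℝ)) (min (w x) n)) (measurable_const.max (hw.min measurable_const))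
      ⟨n, fun x => abs_max_neg_min_le n.cast_nonneg (w x)⟩).symm

lemma abs_le_one_of_eq_zero_or_eq_one {a : ℝ} (ha : a = 0 ∨ a = 1) : |a| ≤ 1 := by
  rcases ha with rfl | rfl <;> simp

lemma MeasureTheory.Integrable.mul_comp_of_abs_le {b f : Ω → ℝ} {h : E → ℝ} {C : ℝ}
    (hX : Measurable X) (hb : AEStronglyMeasurable b P) (hb1 : ∀ ω, |b ω| ≤ 1) (hf : Integrable f P)
    (hh : Measurable h) (hC : ∀ x, |h x| ≤ C) :
    Integrable (fun ω => b ω * f ω * h (X ω)) P := by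
  refine (hf.bdd_mul (f := fun ω => b ω * h (X ω)) (hb.mul (hh.comp hX).aestronglyMeasurable)
    (c := C) (ae_of_all _ fun ω => ?_)).congr (ae_of_all _ fun ω => by ring)
  rw [Real.norm_eq_abs, abs_mul]
  exact (mul_le_of_le_one_left (abs_nonneg _) (hb1 ω)).trans (hC _)

lemma integral_sum_mul_eval {ι : Type*} [Fintype ι] (γ : ι → ℝ) {f : Ω → ι → ℝ}
    (hf : Integrable f P) : ∫ ω, ∑ k, γ k * f ω k ∂P = ∑ k, γ k * ∫ ω, f ω k ∂P := by
  rw [integral_finsetSum _ fun k _ => (hf.eval k).const_mul (γ k)]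
  simp_rw [integral_const_mul]

lemma MeasureTheory.Integrable.of_sq [IsFiniteMeasure P] {f : Ω → ℝ}
    (hf : AEStronglyMeasurable f P) (hsq : Integrable (fun ω => f ω ^ 2) P) : Integrable f P :=
  ((memLp_two_iff_integrable_sq hf).2 hsq).integrable one_le_two

lemma integrable_ipw_mul {δ A Y v : Ω → ℝ} {πA : ℝ} (hA : Measurable A)
    (hA01 : ∀ ω, A ω = 0 ∨ A ω = 1) (hπA0 : 0 < πA) (hπA1 : πA < 1)
    (hδvY : Integrable (fun ω => δ ω * v ω * Y ω) P) :
    Integrable (fun ω => δ ω * (A ω * Y ω / πA - (1 - A ω) * Y ω / (1 - πA)) * v ω) P := by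
  have hπA1' : 0 < 1 - πA := by linarith
  refine (hδvY.bdd_mul (f := fun ω => A ω / πA - (1 - A ω) / (1 - πA)) (by fun_prop)
    (c := πA⁻¹ + (1 - πA)⁻¹) (ae_of_all _ fun ω => ?_)).congr (ae_of_all _ fun ω => by ring)
  rcases hA01 ω with h | h <;>
    simp [h, abs_of_pos hπA0, abs_of_pos hπA1', hπA0.le, hπA1'.le]

theorem integral_ipw_mul_comp_eq {δ A Y : Ω → ℝ} {μ0 μ1 : E → ℝ} {πA : ℝ} (hX : Measurable X)
    (hδ : Measurable δ) (hA : Measurable A) (hδ01 : ∀ ω, δ ω = 0 ∨ δ ω = 1)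
    (hA01 : ∀ ω, A ω = 0 ∨ A ω = 1) (hY : Integrable Y P)
    (hμ0 : Integrable (fun ω => μ0 (X ω)) P) (hμ1 : Integrable (fun ω => μ1 (X ω)) P)
    (hπA0 : πA ≠ 0) (hπA1 : 1 - πA ≠ 0)
    (hout1 : ∀ h : E → ℝ, Measurable h → (∃ C, ∀ x, |h x| ≤ C) →
      ∫ ω, δ ω * A ω * Y ω * h (X ω) ∂P = πA * ∫ ω, δ ω * μ1 (X ω) * h (X ω) ∂P)
    (hout0 : ∀ h : E → ℝ, Measurable h → (∃ C, ∀ x, |h x| ≤ C) →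
      ∫ ω, δ ω * (1 - A ω) * Y ω * h (X ω) ∂P
        = (1 - πA) * ∫ ω, δ ω * μ0 (X ω) * h (X ω) ∂P)
    {h : E → ℝ} {C : ℝ} (hh : Measurable h) (hC : ∀ x, |h x| ≤ C) :
    ∫ ω, δ ω * (A ω * Y ω / πA - (1 - A ω) * Y ω / (1 - πA)) * h (X ω) ∂P
      = ∫ ω, δ ω * (μ1 (X ω) - μ0 (X ω)) * h (X ω) ∂P := by
  have hδ1 ω := abs_le_one_of_eq_zero_or_eq_one (hδ01 ω)
  have hδA1 ω : |δ ω * A ω| ≤ 1 := by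
    rw [abs_mul]
    exact mul_le_one₀ (hδ1 ω) (abs_nonneg _) (abs_le_one_of_eq_zero_or_eq_one (hA01 ω))
  have hδA0 ω : |δ ω * (1 - A ω)| ≤ 1 := by
    rw [abs_mul]
    refine mul_le_one₀ (hδ1 ω) (abs_nonneg _) (abs_le_one_of_eq_zero_or_eq_one ?_)
    rcases hA01 ω with h | h <;> simp [h]
  have hI1 := hY.mul_comp_of_abs_le (b := fun ω => δ ω * A ω) hX
    (hδ.mul hA).aestronglyMeasurable hδA1 hh hC
  have hI0 := hY.mul_comp_of_abs_le (b := fun ω => δ ω * (1 - A ω)) hX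
    (hδ.mul (measurable_const.sub hA)).aestronglyMeasurable hδA0 hh hC
  have hJ1 := hμ1.mul_comp_of_abs_le hX hδ.aestronglyMeasurable hδ1 hh hC
  have hJ0 := hμ0.mul_comp_of_abs_le hX hδ.aestronglyMeasurable hδ1 hh hC
  calc ∫ ω, δ ω * (A ω * Y ω / πA - (1 - A ω) * Y ω / (1 - πA)) * h (X ω) ∂P
      = ∫ ω, (πA⁻¹ * (δ ω * A ω * Y ω * h (X ω))
          - (1 - πA)⁻¹ * (δ ω * (1 - A ω) * Y ω * h (X ω))) ∂P :=
        integral_congr_ae (ae_of_all _ fun ω => by ring)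
    _ = πA⁻¹ * (πA * ∫ ω, δ ω * μ1 (X ω) * h (X ω) ∂P)
          - (1 - πA)⁻¹ * ((1 - πA) * ∫ ω, δ ω * μ0 (X ω) * h (X ω) ∂P) := by
        rw [integral_sub (hI1.const_mul _) (hI0.const_mul _), integral_const_mul,
          integral_const_mul, hout1 h hh ⟨C, hC⟩, hout0 h hh ⟨C, hC⟩]
    _ = ∫ ω, δ ω * (μ1 (X ω) - μ0 (X ω)) * h (X ω) ∂P := by
        rw [inv_mul_cancel_left₀ hπA0, inv_mul_cancel_left₀ hπA1, ← integral_sub hJ1 hJ0]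
        exact integral_congr_ae (ae_of_all _ fun ω => by ring)

end

theorem stmt_4_general
    {Ω : Type*} [MeasurableSpace Ω] (P : Measure Ω) [IsProbabilityMeasure P]
    {p K : ℕ} (X : Ω → (Fin p → ℝ)) (hX : Measurable X)
    (δ A Y : Ω → ℝ)
    (hδ : Measurable δ) (hA : Measurable A) (hY : Measurable Y)
    (hδ01 : ∀ ω, δ ω = 0 ∨ δ ω = 1) (hA01 : ∀ ω, A ω = 0 ∨ A ω = 1)
    (hYsq : Integrable (fun ω => (Y ω) ^ 2) P)
    (g : (Fin p → ℝ) → (Fin K → ℝ))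
    (hgint : Integrable (fun ω => g (X ω)) P)
    (πA : ℝ) (hπA0 : 0 < πA) (hπA1 : πA < 1)
    (μ0 μ1 : (Fin p → ℝ) → ℝ) (hμ0m : Measurable μ0) (hμ1m : Measurable μ1)
    (hμ0sq : Integrable (fun ω => (μ0 (X ω)) ^ 2) P)
    (hμ1sq : Integrable (fun ω => (μ1 (X ω)) ^ 2) P)
    (hout1 : ∀ h : (Fin p → ℝ) → ℝ, Measurable h → (∃ C, ∀ x, |h x| ≤ C) →
      ∫ ω, δ ω * A ω * Y ω * h (X ω) ∂P = πA * ∫ ω, δ ω * μ1 (X ω) * h (X ω) ∂P)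
    (hout0 : ∀ h : (Fin p → ℝ) → ℝ, Measurable h → (∃ C, ∀ x, |h x| ≤ C) →
      ∫ ω, δ ω * (1 - A ω) * Y ω * h (X ω) ∂P
        = (1 - πA) * ∫ ω, δ ω * μ0 (X ω) * h (X ω) ∂P)
    (γ : Fin K → ℝ)
    (hlin : ∀ᵐ ω ∂P, μ1 (X ω) - μ0 (X ω) = ∑ k, γ k * g (X ω) k)
    (w : (Fin p → ℝ) → ℝ) (hwm : Measurable w)
    (hcal : ∀ k, ∫ ω, δ ω * w (X ω) * g (X ω) k ∂P = ∫ ω, g (X ω) k ∂P)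
    (hintwY : Integrable (fun ω => δ ω * w (X ω) * Y ω) P)
    (hintwg : Integrable (fun ω => fun k => δ ω * w (X ω) * g (X ω) k) P) :
    ∫ ω, δ ω * w (X ω) * (A ω * Y ω / πA - (1 - A ω) * Y ω / (1 - πA)) ∂P
      = ∫ ω, (μ1 (X ω) - μ0 (X ω)) ∂P := by
  have hY1 := Integrable.of_sq hY.aestronglyMeasurable hYsq
  have hμ0 := Integrable.of_sq (hμ0m.comp hX).aestronglyMeasurable hμ0sq
  have hμ1 := Integrable.of_sq (hμ1m.comp hX).aestronglyMeasurable hμ1sq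
  have hFw := integrable_ipw_mul hA hA01 hπA0 hπA1 hintwY
  have hGw_eq : (fun ω => δ ω * (μ1 (X ω) - μ0 (X ω)) * w (X ω))
      =ᵐ[P] fun ω => ∑ k, γ k * (δ ω * w (X ω) * g (X ω) k) := by
    filter_upwards [hlin] with ω hω
    rw [hω, Finset.mul_sum, Finset.sum_mul]
    exact Finset.sum_congr rfl fun k _ => by ring
  have hGw := (integrable_finsetSum _ fun k _ => (hintwg.eval k).const_mul (γ k)).congr
    hGw_eq.symm
  calc ∫ ω, δ ω * w (X ω) * (A ω * Y ω / πA - (1 - A ω) * Y ω / (1 - πA)) ∂P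
      = ∫ ω, δ ω * (A ω * Y ω / πA - (1 - A ω) * Y ω / (1 - πA)) * w (X ω) ∂P :=
        integral_congr_ae (ae_of_all _ fun ω => by ring)
    _ = ∫ ω, δ ω * (μ1 (X ω) - μ0 (X ω)) * w (X ω) ∂P :=
        integral_mul_comp_eq_of_forall_bounded hX hwm (by fun_prop) (by fun_prop) hFw hGw
          fun h hh ⟨C, hC⟩ => integral_ipw_mul_comp_eq hX hδ hA hδ01 hA01 hY1 hμ0 hμ1
            hπA0.ne' (by linarith) hout1 hout0 hh hC
    _ = ∑ k, γ k * ∫ ω, δ ω * w (X ω) * g (X ω) k ∂P :=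
        (integral_congr_ae hGw_eq).trans (integral_sum_mul_eval γ hintwg)
    _ = ∑ k, γ k * ∫ ω, g (X ω) k ∂P := by simp_rw [hcal]
    _ = ∫ ω, (μ1 (X ω) - μ0 (X ω)) ∂P :=
        (integral_sum_mul_eval γ hgint).symm.trans (integral_congr_ae hlin).symm

/-- Population-level consistency of the calibration-weighted estimator under a linear
CATE (Theorem 1, case (ii)): if `τ(X) = γᵀ g(X)` a.s. for some `γ ∈ ℝ^K`, and `w : ℝ^p → [0,∞)` is
a measurable weight whose δ-weighted g-moments are calibrated to the population,
`E[δ·w(X)·g(X)] = E[g(X)]` componentwise, then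
`E[δ·w(X)·(A·Y/π_A − (1−A)·Y/(1−π_A))] = τ0`. -/
theorem stmt_4
    {Ω : Type*} [MeasurableSpace Ω] (P : Measure Ω) [IsProbabilityMeasure P]
    {p K : ℕ} (X : Ω → (Fin p → ℝ)) (hX : Measurable X)
    (δ A Y : Ω → ℝ)
    (hδ : Measurable δ) (hA : Measurable A) (hY : Measurable Y)
    (hδ01 : ∀ ω, δ ω = 0 ∨ δ ω = 1) (hA01 : ∀ ω, A ω = 0 ∨ A ω = 1)
    (hYsq : Integrable (fun ω => (Y ω) ^ 2) P)
    (g : (Fin p → ℝ) → (Fin K → ℝ)) (hgm : Measurable g)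
    (hgint : Integrable (fun ω => g (X ω)) P)
    (πA : ℝ) (hπA0 : 0 < πA) (hπA1 : πA < 1)
    (μ0 μ1 : (Fin p → ℝ) → ℝ) (hμ0m : Measurable μ0) (hμ1m : Measurable μ1)
    (hμ0sq : Integrable (fun ω => (μ0 (X ω)) ^ 2) P)
    (hμ1sq : Integrable (fun ω => (μ1 (X ω)) ^ 2) P)
    (hout1 : ∀ h : (Fin p → ℝ) → ℝ, Measurable h → (∃ C, ∀ x, |h x| ≤ C) →
      ∫ ω, δ ω * A ω * Y ω * h (X ω) ∂P = πA * ∫ ω, δ ω * μ1 (X ω) * h (X ω) ∂P)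
    (hout0 : ∀ h : (Fin p → ℝ) → ℝ, Measurable h → (∃ C, ∀ x, |h x| ≤ C) →
      ∫ ω, δ ω * (1 - A ω) * Y ω * h (X ω) ∂P
        = (1 - πA) * ∫ ω, δ ω * μ0 (X ω) * h (X ω) ∂P)
    (γ : Fin K → ℝ)
    (hlin : ∀ᵐ ω ∂P, μ1 (X ω) - μ0 (X ω) = ∑ k, γ k * g (X ω) k)
    (w : (Fin p → ℝ) → ℝ) (hwm : Measurable w) (hw0 : ∀ x, 0 ≤ w x)
    (hcal : ∀ k, ∫ ω, δ ω * w (X ω) * g (X ω) k ∂P = ∫ ω, g (X ω) k ∂P)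
    (hintwY : Integrable (fun ω => δ ω * w (X ω) * Y ω) P)
    (hintwg : Integrable (fun ω => fun k => δ ω * w (X ω) * g (X ω) k) P) :
    ∫ ω, δ ω * w (X ω) * (A ω * Y ω / πA - (1 - A ω) * Y ω / (1 - πA)) ∂P
      = ∫ ω, (μ1 (X ω) - μ0 (X ω)) ∂P :=
  stmt_4_general P X hX δ A Y hδ hA hY hδ01 hA01 hYsq g hgint πA hπA0 hπA1 μ0 μ1 hμ0m hμ1m hμ0sq
    hμ1sq hout1 hout0 γ hlin w hwm hcal hintwY hintwg
end

section
/- Second moment of the efficiency score equals the semiparametric efficiency bound (variance formula of Theorem 2): with φ = (δ/π(X))·[A·(Y − μ1(X))/π_A − (1−A)·(Y − μ0(X))/(1−π_A)] + δ̃·d·(τ(X) − τ0), one has E[φ²] = E[(δ/π(X)²)·(σ1²(X)/π_A + σ0²(X)/(1−π_A))] + E[δ̃·d²·(τ(X) − τ0)²]. -/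
open MeasureTheory

/-- Second moment of the efficiency score equals the semiparametric efficiency bound
(variance formula of Theorem 2): with
`φ = (δ/π(X))·[A·(Y − μ1(X))/π_A − (1−A)·(Y − μ0(X))/(1−π_A)] + δ̃·d·(τ(X) − τ0)`, one has
`E[φ²] = E[(δ/π(X)²)·(σ1²(X)/π_A + σ0²(X)/(1−π_A))] + E[δ̃·d²·(τ(X) − τ0)²]`. -/
theorem stmt_6
    {Ω : Type*} [MeasurableSpace Ω] (P : Measure Ω) [IsProbabilityMeasure P]
    {p : ℕ} (X : Ω → (Fin p → ℝ)) (hX : Measurable X)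
    (δ δt A Y : Ω → ℝ)
    (hδ : Measurable δ) (hδt : Measurable δt) (hA : Measurable A) (hY : Measurable Y)
    (hδ01 : ∀ ω, δ ω = 0 ∨ δ ω = 1) (hδt01 : ∀ ω, δt ω = 0 ∨ δt ω = 1)
    (hdisj : ∀ᵐ ω ∂P, δ ω * δt ω = 0)
    (hA01 : ∀ ω, A ω = 0 ∨ A ω = 1)
    (hYsq : Integrable (fun ω => (Y ω) ^ 2) P)
    (π : (Fin p → ℝ) → ℝ) (hπm : Measurable π)
    (c : ℝ) (hc : 0 < c) (hπlb : ∀ x, c ≤ π x) (hπub : ∀ x, π x ≤ 1)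
    (hπver : ∀ h : (Fin p → ℝ) → ℝ, Measurable h → (∃ C, ∀ x, |h x| ≤ C) →
      ∫ ω, δ ω * h (X ω) ∂P = ∫ ω, π (X ω) * h (X ω) ∂P)
    (ρ : (Fin p → ℝ) → ℝ) (hρm : Measurable ρ)
    (c' : ℝ) (hc' : 0 < c') (hρlb : ∀ x, c' ≤ ρ x) (hρub : ∀ x, ρ x ≤ 1)
    (hρver : ∀ h : (Fin p → ℝ) → ℝ, Measurable h → (∃ C, ∀ x, |h x| ≤ C) →
      ∫ ω, δt ω * h (X ω) ∂P = ∫ ω, ρ (X ω) * h (X ω) ∂P)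
    (πA : ℝ) (hπA0 : 0 < πA) (hπA1 : πA < 1)
    (μ0 μ1 : (Fin p → ℝ) → ℝ) (hμ0m : Measurable μ0) (hμ1m : Measurable μ1)
    (hμ0sq : Integrable (fun ω => (μ0 (X ω)) ^ 2) P)
    (hμ1sq : Integrable (fun ω => (μ1 (X ω)) ^ 2) P)
    (hout1 : ∀ h : (Fin p → ℝ) → ℝ, Measurable h → (∃ C, ∀ x, |h x| ≤ C) →
      ∫ ω, δ ω * A ω * Y ω * h (X ω) ∂P = πA * ∫ ω, δ ω * μ1 (X ω) * h (X ω) ∂P)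
    (hout0 : ∀ h : (Fin p → ℝ) → ℝ, Measurable h → (∃ C, ∀ x, |h x| ≤ C) →
      ∫ ω, δ ω * (1 - A ω) * Y ω * h (X ω) ∂P
        = (1 - πA) * ∫ ω, δ ω * μ0 (X ω) * h (X ω) ∂P)
    (σsq0 σsq1 : (Fin p → ℝ) → ℝ) (hσ0m : Measurable σsq0) (hσ1m : Measurable σsq1)
    (hσ00 : ∀ x, 0 ≤ σsq0 x) (hσ10 : ∀ x, 0 ≤ σsq1 x)
    (hσ0int : Integrable (fun ω => σsq0 (X ω)) P)
    (hσ1int : Integrable (fun ω => σsq1 (X ω)) P)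
    (hvar1 : ∀ h : (Fin p → ℝ) → ℝ, Measurable h → (∃ C, ∀ x, |h x| ≤ C) →
      ∫ ω, δ ω * A ω * (Y ω - μ1 (X ω)) ^ 2 * h (X ω) ∂P
        = πA * ∫ ω, δ ω * σsq1 (X ω) * h (X ω) ∂P)
    (hvar0 : ∀ h : (Fin p → ℝ) → ℝ, Measurable h → (∃ C, ∀ x, |h x| ≤ C) →
      ∫ ω, δ ω * (1 - A ω) * (Y ω - μ0 (X ω)) ^ 2 * h (X ω) ∂P
        = (1 - πA) * ∫ ω, δ ω * σsq0 (X ω) * h (X ω) ∂P)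
    (τ0 : ℝ) (hτ0 : τ0 = ∫ ω, (μ1 (X ω) - μ0 (X ω)) ∂P)
    (hφsqint : Integrable (fun ω =>
      (δ ω / π (X ω) * (A ω * (Y ω - μ1 (X ω)) / πA
          - (1 - A ω) * (Y ω - μ0 (X ω)) / (1 - πA))
        + δt ω * (1 / ρ (X ω)) * ((μ1 (X ω) - μ0 (X ω)) - τ0)) ^ 2) P)
    (hR1int : Integrable (fun ω =>
      δ ω / (π (X ω)) ^ 2 * (σsq1 (X ω) / πA + σsq0 (X ω) / (1 - πA))) P)
    (hR2int : Integrable (fun ω =>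
      δt ω * (1 / ρ (X ω)) ^ 2 * ((μ1 (X ω) - μ0 (X ω)) - τ0) ^ 2) P) :
    ∫ ω, (δ ω / π (X ω) * (A ω * (Y ω - μ1 (X ω)) / πA
          - (1 - A ω) * (Y ω - μ0 (X ω)) / (1 - πA))
        + δt ω * (1 / ρ (X ω)) * ((μ1 (X ω) - μ0 (X ω)) - τ0)) ^ 2 ∂P
      = (∫ ω, δ ω / (π (X ω)) ^ 2 * (σsq1 (X ω) / πA + σsq0 (X ω) / (1 - πA)) ∂P)
        + ∫ ω, δt ω * (1 / ρ (X ω)) ^ 2 * ((μ1 (X ω) - μ0 (X ω)) - τ0) ^ 2 ∂P := by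

  classical
  have hπAne : πA ≠ 0 := ne_of_gt hπA0
  have h1πA : (0:ℝ) < 1 - πA := by linarith
  have h1πAne : (1:ℝ) - πA ≠ 0 := ne_of_gt h1πA
  set T : Ω → ℝ := fun ω => δ ω / π (X ω) * (A ω * (Y ω - μ1 (X ω)) / πA
      - (1 - A ω) * (Y ω - μ0 (X ω)) / (1 - πA)) with hTdef
  set S : Ω → ℝ := fun ω => δt ω * (1 / ρ (X ω)) * ((μ1 (X ω) - μ0 (X ω)) - τ0) with hSdef
  -- pointwise facts
  have hπne : ∀ ω, π (X ω) ≠ 0 := fun ω => (lt_of_lt_of_le hc (hπlb (X ω))).ne'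
  have hδnn : ∀ ω, 0 ≤ δ ω := fun ω => by rcases hδ01 ω with h0 | h0 <;> simp [h0]
  have hδle : ∀ ω, δ ω ≤ 1 := fun ω => by rcases hδ01 ω with h0 | h0 <;> simp [h0]
  have hAnn : ∀ ω, 0 ≤ A ω := fun ω => by rcases hA01 ω with h0 | h0 <;> simp [h0]
  have hAle : ∀ ω, A ω ≤ 1 := fun ω => by rcases hA01 ω with h0 | h0 <;> simp [h0]
  -- a.e. : (T+S)^2 = T^2 + S^2
  have hae : ∀ᵐ ω ∂P, (T ω + S ω) ^ 2 = T ω ^ 2 + S ω ^ 2 := by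
    filter_upwards [hdisj] with ω hω
    have hTS : T ω * S ω = 0 := by
      rcases mul_eq_zero.1 hω with h0 | h0 <;> simp [hTdef, hSdef, h0]
    have : (T ω + S ω) ^ 2 = T ω ^ 2 + S ω ^ 2 + 2 * (T ω * S ω) := by ring
    rw [this, hTS]; ring
  -- S^2 pointwise
  have hSsq : ∀ ω, S ω ^ 2
      = δt ω * (1 / ρ (X ω)) ^ 2 * ((μ1 (X ω) - μ0 (X ω)) - τ0) ^ 2 := by
    intro ω
    rcases hδt01 ω with h0 | h0 <;> simp [hSdef, h0] <;> ring
  have hS2int : Integrable (fun ω => S ω ^ 2) P :=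
    hR2int.congr (Filter.Eventually.of_forall fun ω => (hSsq ω).symm)
  have hφint : Integrable (fun ω => (T ω + S ω) ^ 2) P := hφsqint
  have hT2int : Integrable (fun ω => T ω ^ 2) P := by
    refine (hφint.sub hS2int).congr ?_
    filter_upwards [hae] with ω hω
    simp [hω]
  -- split the integral
  have hsplit : ∫ ω, (T ω + S ω) ^ 2 ∂P = (∫ ω, T ω ^ 2 ∂P) + ∫ ω, S ω ^ 2 ∂P := by
    rw [integral_congr_ae hae, integral_add hT2int hS2int]
  -- S^2 integral
  have hSint_eq : ∫ ω, S ω ^ 2 ∂P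
      = ∫ ω, δt ω * (1 / ρ (X ω)) ^ 2 * ((μ1 (X ω) - μ0 (X ω)) - τ0) ^ 2 ∂P :=
    integral_congr_ae (Filter.Eventually.of_forall hSsq)
  -- the weight function
  set h : (Fin p → ℝ) → ℝ := fun x => 1 / (π x) ^ 2 with hhdef
  have hhm : Measurable h := measurable_const.div (hπm.pow_const 2)
  have hhb : ∃ C, ∀ x, |h x| ≤ C := by
    refine ⟨1 / c ^ 2, fun x => ?_⟩
    have h1 := hπlb x
    have h2 : (0:ℝ) < π x := lt_of_lt_of_le hc h1
    rw [abs_of_nonneg (by positivity)]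
    have : c ^ 2 ≤ (π x) ^ 2 := by nlinarith
    exact one_div_le_one_div_of_le (by positivity) this
  have hhpos : ∀ x, 0 < h x := fun x => by
    have := hπlb x; have : (0:ℝ) < π x := lt_of_lt_of_le hc this; positivity
  have hhle : ∀ x, h x ≤ 1 / c ^ 2 := fun x => by
    have h1 := hπlb x
    have h2 : (0:ℝ) < π x := lt_of_lt_of_le hc h1
    have : c ^ 2 ≤ (π x) ^ 2 := by nlinarith
    exact one_div_le_one_div_of_le (by positivity) this
  -- define g1, g0
  set g1 : Ω → ℝ := fun ω => δ ω * A ω * (Y ω - μ1 (X ω)) ^ 2 * h (X ω) with hg1def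
  set g0 : Ω → ℝ := fun ω => δ ω * (1 - A ω) * (Y ω - μ0 (X ω)) ^ 2 * h (X ω) with hg0def
  have hg1nn : ∀ ω, 0 ≤ g1 ω := fun ω =>
    mul_nonneg (mul_nonneg (mul_nonneg (hδnn ω) (hAnn ω)) (sq_nonneg _)) (hhpos _).le
  have hg0nn : ∀ ω, 0 ≤ g0 ω := fun ω =>
    mul_nonneg (mul_nonneg (mul_nonneg (hδnn ω) (sub_nonneg.2 (hAle ω))) (sq_nonneg _))
      (hhpos _).le
  -- pointwise decomposition of T^2
  have hT2eq : ∀ ω, T ω ^ 2 = g1 ω / πA ^ 2 + g0 ω / (1 - πA) ^ 2 := by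
    intro ω
    have hπ := hπne ω
    rcases hδ01 ω with h0 | h0 <;> rcases hA01 ω with h1 | h1 <;>
      simp only [hTdef, hg1def, hg0def, hhdef, h0, h1] <;> field_simp <;>
      (first | ring1 | exact Or.inl (by ring) | exact Or.inr (by ring) | tauto)
  have hg1m : Measurable g1 :=
    ((hδ.mul hA).mul ((hY.sub (hμ1m.comp hX)).pow_const 2)).mul (hhm.comp hX)
  have hg0m : Measurable g0 :=
    ((hδ.mul (measurable_const.sub hA)).mul ((hY.sub (hμ0m.comp hX)).pow_const 2)).mul
      (hhm.comp hX)
  have hg1int : Integrable g1 P := by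
    refine Integrable.mono (hT2int.const_mul (πA ^ 2)) hg1m.aestronglyMeasurable ?_
    refine Filter.Eventually.of_forall fun ω => ?_
    have h1 := hg1nn ω
    have h0 := hg0nn ω
    have hT2 := hT2eq ω
    simp only [Real.norm_eq_abs]
    rw [abs_of_nonneg h1, abs_of_nonneg (by positivity : (0:ℝ) ≤ πA ^ 2 * T ω ^ 2)]
    have hle : g1 ω / πA ^ 2 ≤ T ω ^ 2 := by
      rw [hT2]
      have : 0 ≤ g0 ω / (1 - πA) ^ 2 := div_nonneg h0 (by positivity)
      linarith
    have h2 : g1 ω ≤ T ω ^ 2 * πA ^ 2 := (div_le_iff₀ (by positivity)).1 hle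
    exact le_trans h2 (le_of_eq (mul_comm _ _))
  have hg0int : Integrable g0 P := by
    refine Integrable.mono (hT2int.const_mul ((1 - πA) ^ 2)) hg0m.aestronglyMeasurable ?_
    refine Filter.Eventually.of_forall fun ω => ?_
    have h1 := hg1nn ω
    have h0 := hg0nn ω
    have hT2 := hT2eq ω
    simp only [Real.norm_eq_abs]
    rw [abs_of_nonneg h0, abs_of_nonneg (by positivity : (0:ℝ) ≤ (1 - πA) ^ 2 * T ω ^ 2)]
    have hle : g0 ω / (1 - πA) ^ 2 ≤ T ω ^ 2 := by
      rw [hT2]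
      have : 0 ≤ g1 ω / πA ^ 2 := div_nonneg h1 (by positivity)
      linarith
    have h2 : g0 ω ≤ T ω ^ 2 * (1 - πA) ^ 2 := (div_le_iff₀ (by positivity)).1 hle
    exact le_trans h2 (le_of_eq (mul_comm _ _))
  -- conditional variance identities
  have hv1 := hvar1 h hhm hhb
  have hv0 := hvar0 h hhm hhb
  -- ∫ g1 = πA * ∫ δ σ1 h ;  ∫ g0 = (1-πA) * ∫ δ σ0 h
  have hg1eq : ∫ ω, g1 ω ∂P = πA * ∫ ω, δ ω * σsq1 (X ω) * h (X ω) ∂P := by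
    exact hv1
  have hg0eq : ∫ ω, g0 ω ∂P = (1 - πA) * ∫ ω, δ ω * σsq0 (X ω) * h (X ω) ∂P := by
    exact hv0
  -- integrability of the σ terms
  have hσ1T : Integrable (fun ω => δ ω * σsq1 (X ω) * h (X ω)) P := by
    refine Integrable.mono (hσ1int.const_mul (1 / c ^ 2))
      (((hδ.mul (hσ1m.comp hX)).mul (hhm.comp hX)).aestronglyMeasurable) ?_
    refine Filter.Eventually.of_forall fun ω => ?_
    have hs := hσ10 (X ω)
    have hhp := (hhpos (X ω)).le
    have hhl := hhle (X ω)
    simp only [Real.norm_eq_abs]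
    rw [abs_of_nonneg (mul_nonneg (mul_nonneg (hδnn ω) hs) hhp),
      abs_of_nonneg (mul_nonneg (by positivity) hs)]
    calc δ ω * σsq1 (X ω) * h (X ω) ≤ 1 * σsq1 (X ω) * h (X ω) :=
          mul_le_mul_of_nonneg_right (mul_le_mul_of_nonneg_right (hδle ω) hs) hhp
      _ = σsq1 (X ω) * h (X ω) := by ring
      _ ≤ σsq1 (X ω) * (1 / c ^ 2) := mul_le_mul_of_nonneg_left hhl hs
      _ = 1 / c ^ 2 * σsq1 (X ω) := by ring
  have hσ0T : Integrable (fun ω => δ ω * σsq0 (X ω) * h (X ω)) P := by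
    refine Integrable.mono (hσ0int.const_mul (1 / c ^ 2))
      (((hδ.mul (hσ0m.comp hX)).mul (hhm.comp hX)).aestronglyMeasurable) ?_
    refine Filter.Eventually.of_forall fun ω => ?_
    have hs := hσ00 (X ω)
    have hhp := (hhpos (X ω)).le
    have hhl := hhle (X ω)
    simp only [Real.norm_eq_abs]
    rw [abs_of_nonneg (mul_nonneg (mul_nonneg (hδnn ω) hs) hhp),
      abs_of_nonneg (mul_nonneg (by positivity) hs)]
    calc δ ω * σsq0 (X ω) * h (X ω) ≤ 1 * σsq0 (X ω) * h (X ω) :=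
          mul_le_mul_of_nonneg_right (mul_le_mul_of_nonneg_right (hδle ω) hs) hhp
      _ = σsq0 (X ω) * h (X ω) := by ring
      _ ≤ σsq0 (X ω) * (1 / c ^ 2) := mul_le_mul_of_nonneg_left hhl hs
      _ = 1 / c ^ 2 * σsq0 (X ω) := by ring
  -- compute ∫ T^2
  have hTint_eq : ∫ ω, T ω ^ 2 ∂P
      = ∫ ω, δ ω / (π (X ω)) ^ 2 * (σsq1 (X ω) / πA + σsq0 (X ω) / (1 - πA)) ∂P := by
    have e1 : ∫ ω, T ω ^ 2 ∂P = (∫ ω, g1 ω ∂P) / πA ^ 2 + (∫ ω, g0 ω ∂P) / (1 - πA) ^ 2 := by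
      rw [← integral_div, ← integral_div, ← integral_add (hg1int.div_const _) (hg0int.div_const _)]
      exact integral_congr_ae (Filter.Eventually.of_forall hT2eq)
    rw [e1, hg1eq, hg0eq]
    have e2 : ∫ ω, δ ω / (π (X ω)) ^ 2 * (σsq1 (X ω) / πA + σsq0 (X ω) / (1 - πA)) ∂P
        = (∫ ω, δ ω * σsq1 (X ω) * h (X ω) ∂P) / πA
          + (∫ ω, δ ω * σsq0 (X ω) * h (X ω) ∂P) / (1 - πA) := by
      rw [← integral_div, ← integral_div,
        ← integral_add (hσ1T.div_const _) (hσ0T.div_const _)]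
      refine integral_congr_ae (Filter.Eventually.of_forall fun ω => ?_)
      simp only [hhdef]
      ring
    rw [e2]
    field_simp
  calc ∫ ω, (T ω + S ω) ^ 2 ∂P = (∫ ω, T ω ^ 2 ∂P) + ∫ ω, S ω ^ 2 ∂P := hsplit
  _ = _ := by rw [hTint_eq, hSint_eq]
end

section
/- The semiparametric efficiency bound is no larger than the asymptotic variance of the calibration weighting estimator (Remark after Theorem 2): define V_eff = E[(δ/π(X)²)·(σ1²(X)/π_A + σ0²(X)/(1−π_A))] + E[δ̃·d²·(τ(X) − τ0)²] and V_CW = E[δ̃·d²·(τ(X) − τ0)²] + E[(δ/π(X)²)·(m2_1(X)/π_A + m2_0(X)/(1−π_A) − 2·τ(X)·τ0 + τ0²)]. Then V_CW − V_eff = E[(δ/π(X)²)·(μ1(X)²/π_A + μ0(X)²/(1−π_A) − 2·τ(X)·τ0 + τ0²)] ≥ E[(δ/π(X)²)·(τ(X) − τ0)²] ≥ 0; in particular V_eff ≤ V_CW. -/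
open MeasureTheory

/-- The semiparametric efficiency bound is no larger than the asymptotic variance of
the calibration weighting estimator (Remark after Theorem 2): with
`V_eff = E[(δ/π(X)²)·(σ1²(X)/π_A + σ0²(X)/(1−π_A))] + E[δ̃·d²·(τ(X) − τ0)²]` and
`V_CW = E[δ̃·d²·(τ(X) − τ0)²] + E[(δ/π(X)²)·(m2_1(X)/π_A + m2_0(X)/(1−π_A) − 2τ(X)τ0 + τ0²)]`,
where `σ_a²(x) = m2_a(x) − μ_a(x)²`, one has
`V_CW − V_eff = E[(δ/π(X)²)·(μ1(X)²/π_A + μ0(X)²/(1−π_A) − 2τ(X)τ0 + τ0²)]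
  ≥ E[(δ/π(X)²)·(τ(X) − τ0)²] ≥ 0`; in particular `V_eff ≤ V_CW`. -/
theorem stmt_9
    {Ω : Type*} [MeasurableSpace Ω] (P : Measure Ω) [IsProbabilityMeasure P]
    {p : ℕ} (X : Ω → (Fin p → ℝ)) (hX : Measurable X)
    (δ δt A Y : Ω → ℝ)
    (hδ : Measurable δ) (hδt : Measurable δt) (hA : Measurable A) (hY : Measurable Y)
    (hδ01 : ∀ ω, δ ω = 0 ∨ δ ω = 1) (hδt01 : ∀ ω, δt ω = 0 ∨ δt ω = 1)
    (hA01 : ∀ ω, A ω = 0 ∨ A ω = 1)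
    (hYsq : Integrable (fun ω => (Y ω) ^ 2) P)
    (π : (Fin p → ℝ) → ℝ) (hπm : Measurable π)
    (c : ℝ) (hc : 0 < c) (hπlb : ∀ x, c ≤ π x) (hπub : ∀ x, π x ≤ 1)
    (hπver : ∀ h : (Fin p → ℝ) → ℝ, Measurable h → (∃ C, ∀ x, |h x| ≤ C) →
      ∫ ω, δ ω * h (X ω) ∂P = ∫ ω, π (X ω) * h (X ω) ∂P)
    (ρ : (Fin p → ℝ) → ℝ) (hρm : Measurable ρ)
    (c' : ℝ) (hc' : 0 < c') (hρlb : ∀ x, c' ≤ ρ x) (hρub : ∀ x, ρ x ≤ 1)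
    (hρver : ∀ h : (Fin p → ℝ) → ℝ, Measurable h → (∃ C, ∀ x, |h x| ≤ C) →
      ∫ ω, δt ω * h (X ω) ∂P = ∫ ω, ρ (X ω) * h (X ω) ∂P)
    (πA : ℝ) (hπA0 : 0 < πA) (hπA1 : πA < 1)
    (μ0 μ1 : (Fin p → ℝ) → ℝ) (hμ0m : Measurable μ0) (hμ1m : Measurable μ1)
    (hμ0sq : Integrable (fun ω => (μ0 (X ω)) ^ 2) P)
    (hμ1sq : Integrable (fun ω => (μ1 (X ω)) ^ 2) P)
    (hout1 : ∀ h : (Fin p → ℝ) → ℝ, Measurable h → (∃ C, ∀ x, |h x| ≤ C) →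
      ∫ ω, δ ω * A ω * Y ω * h (X ω) ∂P = πA * ∫ ω, δ ω * μ1 (X ω) * h (X ω) ∂P)
    (hout0 : ∀ h : (Fin p → ℝ) → ℝ, Measurable h → (∃ C, ∀ x, |h x| ≤ C) →
      ∫ ω, δ ω * (1 - A ω) * Y ω * h (X ω) ∂P
        = (1 - πA) * ∫ ω, δ ω * μ0 (X ω) * h (X ω) ∂P)
    (m2_0 m2_1 : (Fin p → ℝ) → ℝ) (hm20m : Measurable m2_0) (hm21m : Measurable m2_1)
    (hm200 : ∀ x, 0 ≤ m2_0 x) (hm210 : ∀ x, 0 ≤ m2_1 x)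
    (hm2ge0 : ∀ x, (μ0 x) ^ 2 ≤ m2_0 x) (hm2ge1 : ∀ x, (μ1 x) ^ 2 ≤ m2_1 x)
    (hm20int : Integrable (fun ω => m2_0 (X ω)) P)
    (hm21int : Integrable (fun ω => m2_1 (X ω)) P)
    (τ0 : ℝ) (hτ0 : τ0 = ∫ ω, (μ1 (X ω) - μ0 (X ω)) ∂P)
    (Veff VCW : ℝ)
    (hVeff : Veff
      = (∫ ω, δ ω / (π (X ω)) ^ 2
            * ((m2_1 (X ω) - (μ1 (X ω)) ^ 2) / πA
              + (m2_0 (X ω) - (μ0 (X ω)) ^ 2) / (1 - πA)) ∂P)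
        + ∫ ω, δt ω * (1 / ρ (X ω)) ^ 2 * ((μ1 (X ω) - μ0 (X ω)) - τ0) ^ 2 ∂P)
    (hVCW : VCW
      = (∫ ω, δt ω * (1 / ρ (X ω)) ^ 2 * ((μ1 (X ω) - μ0 (X ω)) - τ0) ^ 2 ∂P)
        + ∫ ω, δ ω / (π (X ω)) ^ 2
            * (m2_1 (X ω) / πA + m2_0 (X ω) / (1 - πA)
              - 2 * (μ1 (X ω) - μ0 (X ω)) * τ0 + τ0 ^ 2) ∂P)
    (hI1 : Integrable (fun ω => δ ω / (π (X ω)) ^ 2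
        * ((m2_1 (X ω) - (μ1 (X ω)) ^ 2) / πA
          + (m2_0 (X ω) - (μ0 (X ω)) ^ 2) / (1 - πA))) P)
    (hI2 : Integrable (fun ω =>
        δt ω * (1 / ρ (X ω)) ^ 2 * ((μ1 (X ω) - μ0 (X ω)) - τ0) ^ 2) P)
    (hI3 : Integrable (fun ω => δ ω / (π (X ω)) ^ 2
        * (m2_1 (X ω) / πA + m2_0 (X ω) / (1 - πA)
          - 2 * (μ1 (X ω) - μ0 (X ω)) * τ0 + τ0 ^ 2)) P)
    (hI4 : Integrable (fun ω => δ ω / (π (X ω)) ^ 2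
        * (((μ1 (X ω)) ^ 2) / πA + ((μ0 (X ω)) ^ 2) / (1 - πA)
          - 2 * (μ1 (X ω) - μ0 (X ω)) * τ0 + τ0 ^ 2)) P)
    (hI5 : Integrable (fun ω =>
        δ ω / (π (X ω)) ^ 2 * ((μ1 (X ω) - μ0 (X ω)) - τ0) ^ 2) P) :
    (VCW - Veff
      = ∫ ω, δ ω / (π (X ω)) ^ 2
          * (((μ1 (X ω)) ^ 2) / πA + ((μ0 (X ω)) ^ 2) / (1 - πA)
            - 2 * (μ1 (X ω) - μ0 (X ω)) * τ0 + τ0 ^ 2) ∂P) ∧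
    ((∫ ω, δ ω / (π (X ω)) ^ 2 * ((μ1 (X ω) - μ0 (X ω)) - τ0) ^ 2 ∂P)
      ≤ ∫ ω, δ ω / (π (X ω)) ^ 2
          * (((μ1 (X ω)) ^ 2) / πA + ((μ0 (X ω)) ^ 2) / (1 - πA)
            - 2 * (μ1 (X ω) - μ0 (X ω)) * τ0 + τ0 ^ 2) ∂P) ∧
    (0 ≤ ∫ ω, δ ω / (π (X ω)) ^ 2 * ((μ1 (X ω) - μ0 (X ω)) - τ0) ^ 2 ∂P) ∧
    Veff ≤ VCW := by
  have hπA1' : 0 < 1 - πA := by linarith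
  -- weight nonneg
  have hw : ∀ ω, 0 ≤ δ ω / (π (X ω)) ^ 2 := by
    intro ω
    rcases hδ01 ω with h | h <;> rw [h] <;> positivity
  -- key scalar inequality
  have hkey : ∀ a b : ℝ, (a - b) ^ 2 ≤ a ^ 2 / πA + b ^ 2 / (1 - πA) := by
    intro a b
    have hid : a ^ 2 / πA + b ^ 2 / (1 - πA) - (a - b) ^ 2
        = ((1 - πA) * a + πA * b) ^ 2 / (πA * (1 - πA)) := by
      field_simp
      ring
    nlinarith [sq_nonneg ((1 - πA) * a + πA * b), mul_pos hπA0 hπA1',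
      div_nonneg (sq_nonneg ((1 - πA) * a + πA * b)) (le_of_lt (mul_pos hπA0 hπA1'))]
  -- pointwise: I5 ≤ I4
  have hpt : ∀ ω, δ ω / (π (X ω)) ^ 2 * ((μ1 (X ω) - μ0 (X ω)) - τ0) ^ 2
      ≤ δ ω / (π (X ω)) ^ 2
        * (((μ1 (X ω)) ^ 2) / πA + ((μ0 (X ω)) ^ 2) / (1 - πA)
          - 2 * (μ1 (X ω) - μ0 (X ω)) * τ0 + τ0 ^ 2) := by
    intro ω
    apply mul_le_mul_of_nonneg_left _ (hw ω)
    have := hkey (μ1 (X ω)) (μ0 (X ω))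
    nlinarith [this]
  -- first claim
  have hdiff : VCW - Veff
      = ∫ ω, δ ω / (π (X ω)) ^ 2
          * (((μ1 (X ω)) ^ 2) / πA + ((μ0 (X ω)) ^ 2) / (1 - πA)
            - 2 * (μ1 (X ω) - μ0 (X ω)) * τ0 + τ0 ^ 2) ∂P := by
    rw [hVCW, hVeff]
    have hsub : (∫ ω, δ ω / (π (X ω)) ^ 2
            * (m2_1 (X ω) / πA + m2_0 (X ω) / (1 - πA)
              - 2 * (μ1 (X ω) - μ0 (X ω)) * τ0 + τ0 ^ 2) ∂P)
        - (∫ ω, δ ω / (π (X ω)) ^ 2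
            * ((m2_1 (X ω) - (μ1 (X ω)) ^ 2) / πA
              + (m2_0 (X ω) - (μ0 (X ω)) ^ 2) / (1 - πA)) ∂P)
        = ∫ ω, (δ ω / (π (X ω)) ^ 2
            * (m2_1 (X ω) / πA + m2_0 (X ω) / (1 - πA)
              - 2 * (μ1 (X ω) - μ0 (X ω)) * τ0 + τ0 ^ 2)
          - δ ω / (π (X ω)) ^ 2
            * ((m2_1 (X ω) - (μ1 (X ω)) ^ 2) / πA
              + (m2_0 (X ω) - (μ0 (X ω)) ^ 2) / (1 - πA))) ∂P :=
      (integral_sub hI3 hI1).symm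
    have hcongr : ∫ ω, (δ ω / (π (X ω)) ^ 2
            * (m2_1 (X ω) / πA + m2_0 (X ω) / (1 - πA)
              - 2 * (μ1 (X ω) - μ0 (X ω)) * τ0 + τ0 ^ 2)
          - δ ω / (π (X ω)) ^ 2
            * ((m2_1 (X ω) - (μ1 (X ω)) ^ 2) / πA
              + (m2_0 (X ω) - (μ0 (X ω)) ^ 2) / (1 - πA))) ∂P
        = ∫ ω, δ ω / (π (X ω)) ^ 2
            * (((μ1 (X ω)) ^ 2) / πA + ((μ0 (X ω)) ^ 2) / (1 - πA)
              - 2 * (μ1 (X ω) - μ0 (X ω)) * τ0 + τ0 ^ 2) ∂P := by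
      congr 1
      funext ω
      field_simp
      ring
    linarith [hsub, hcongr]
  have hle : (∫ ω, δ ω / (π (X ω)) ^ 2 * ((μ1 (X ω) - μ0 (X ω)) - τ0) ^ 2 ∂P)
      ≤ ∫ ω, δ ω / (π (X ω)) ^ 2
          * (((μ1 (X ω)) ^ 2) / πA + ((μ0 (X ω)) ^ 2) / (1 - πA)
            - 2 * (μ1 (X ω) - μ0 (X ω)) * τ0 + τ0 ^ 2) ∂P :=
    integral_mono hI5 hI4 hpt
  have hnn : 0 ≤ ∫ ω, δ ω / (π (X ω)) ^ 2 * ((μ1 (X ω) - μ0 (X ω)) - τ0) ^ 2 ∂P :=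
    integral_nonneg fun ω => mul_nonneg (hw ω) (sq_nonneg _)
  exact ⟨hdiff, hle, hnn, by linarith⟩
end

section
/- Population identity for the Hájek-type IPSW estimator (population version of equation (1)): the normalizing denominators satisfy E[(δ/π(X))·A] = π_A and E[(δ/π(X))·(1−A)] = 1 − π_A, both strictly positive, and E[(δ/π(X))·A·Y] / E[(δ/π(X))·A] − E[(δ/π(X))·(1−A)·Y] / E[(δ/π(X))·(1−A)] = τ0. -/
open MeasureTheory

open Filter

private lemma abs_clip_le (n : ℕ) (t : ℝ) : |max (-(n:ℝ)) (min (n:ℝ) t)| ≤ |t| := by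
  have hn : (0:ℝ) ≤ n := Nat.cast_nonneg n
  rw [abs_le]
  refine ⟨le_trans (le_min (by linarith [abs_nonneg t]) (neg_abs_le t)) (le_max_right _ _), ?_⟩
  exact max_le (by linarith [abs_nonneg t]) ((min_le_right _ _).trans (le_abs_self t))

private lemma clip_tendsto (t : ℝ) :
    Tendsto (fun n : ℕ => max (-(n:ℝ)) (min (n:ℝ) t)) atTop (nhds t) := by
  refine Tendsto.congr' ?_ (tendsto_const_nhds (x := t))
  filter_upwards [eventually_ge_atTop ⌈|t|⌉₊] with n hn
  have h1 : |t| ≤ (n:ℝ) := le_trans (Nat.le_ceil _) (by exact_mod_cast hn)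
  rw [min_eq_right (le_trans (le_abs_self t) h1),
      max_eq_right (by linarith [neg_abs_le t])]

private lemma int_of_bdd {Ω : Type*} [MeasurableSpace Ω] {P : Measure Ω} [IsFiniteMeasure P]
    {f : Ω → ℝ} (hf : Measurable f) (C : ℝ) (hb : ∀ ω, |f ω| ≤ C) : Integrable f P :=
  ⟨hf.aestronglyMeasurable, HasFiniteIntegral.of_bounded (C := C) (ae_of_all _ hb)⟩

private lemma trunc_ext {Ω : Type*} [MeasurableSpace Ω] (P : Measure Ω) [IsProbabilityMeasure P]
    {p : ℕ} (X : Ω → (Fin p → ℝ)) (hX : Measurable X)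
    (δ : Ω → ℝ) (hδ : Measurable δ) (hδb : ∀ ω, |δ ω| ≤ 1)
    (π : (Fin p → ℝ) → ℝ) (hπm : Measurable π) (hπb : ∀ x, |π x| ≤ 1)
    (g : (Fin p → ℝ) → ℝ) (hg : Measurable g)
    (hgint : Integrable (fun ω => g (X ω)) P)
    (hver : ∀ h : (Fin p → ℝ) → ℝ, Measurable h → (∃ C, ∀ x, |h x| ≤ C) →
      ∫ ω, δ ω * h (X ω) ∂P = ∫ ω, π (X ω) * h (X ω) ∂P) :
    ∫ ω, δ ω * g (X ω) ∂P = ∫ ω, π (X ω) * g (X ω) ∂P := by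
  set clip : ℕ → ℝ → ℝ := fun n t => max (-(n:ℝ)) (min (n:ℝ) t) with hclip
  have hm : ∀ n : ℕ, Measurable (fun x => clip n (g x)) := fun n =>
    measurable_const.max (measurable_const.min hg)
  have hbd : ∀ n : ℕ, ∃ C, ∀ x, |clip n (g x)| ≤ C := by
    intro n
    refine ⟨n, fun x => ?_⟩
    have hn : (0:ℝ) ≤ n := Nat.cast_nonneg n
    rw [abs_le]
    exact ⟨le_max_left _ _, max_le (by linarith) (min_le_left _ _)⟩
  have En : ∀ n : ℕ, ∫ ω, δ ω * clip n (g (X ω)) ∂P = ∫ ω, π (X ω) * clip n (g (X ω)) ∂P :=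
    fun n => hver _ (hm n) (hbd n)
  have T1 : Tendsto (fun n : ℕ => ∫ ω, δ ω * clip n (g (X ω)) ∂P) atTop
      (nhds (∫ ω, δ ω * g (X ω) ∂P)) := by
    refine tendsto_integral_of_dominated_convergence (fun ω => |g (X ω)|)
      (fun n => (hδ.mul ((hm n).comp hX)).aestronglyMeasurable) hgint.abs
      (fun n => ae_of_all _ fun ω => ?_) (ae_of_all _ fun ω => ?_)
    · rw [Real.norm_eq_abs, abs_mul]
      calc |δ ω| * |clip n (g (X ω))| ≤ 1 * |g (X ω)| :=
            mul_le_mul (hδb ω) (abs_clip_le n _) (abs_nonneg _) zero_le_one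
        _ = |g (X ω)| := one_mul _
    · exact (clip_tendsto (g (X ω))).const_mul (δ ω)
  have T2 : Tendsto (fun n : ℕ => ∫ ω, δ ω * clip n (g (X ω)) ∂P) atTop
      (nhds (∫ ω, π (X ω) * g (X ω) ∂P)) := by
    have : Tendsto (fun n : ℕ => ∫ ω, π (X ω) * clip n (g (X ω)) ∂P) atTop
        (nhds (∫ ω, π (X ω) * g (X ω) ∂P)) := by
      refine tendsto_integral_of_dominated_convergence (fun ω => |g (X ω)|)
        (fun n => ((hπm.comp hX).mul ((hm n).comp hX)).aestronglyMeasurable) hgint.abs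
        (fun n => ae_of_all _ fun ω => ?_) (ae_of_all _ fun ω => ?_)
      · rw [Real.norm_eq_abs, abs_mul]
        calc |π (X ω)| * |clip n (g (X ω))| ≤ 1 * |g (X ω)| :=
              mul_le_mul (hπb _) (abs_clip_le n _) (abs_nonneg _) zero_le_one
          _ = |g (X ω)| := one_mul _
      · exact (clip_tendsto (g (X ω))).const_mul (π (X ω))
    exact this.congr fun n => (En n).symm
  exact tendsto_nhds_unique T1 T2

/-- Population identity for the Hájek-type IPSW estimator (population version of
equation (1)): the normalizing denominators satisfy `E[(δ/π(X))·A] = π_A` and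
`E[(δ/π(X))·(1−A)] = 1 − π_A`, both strictly positive, and
`E[(δ/π(X))·A·Y]/E[(δ/π(X))·A] − E[(δ/π(X))·(1−A)·Y]/E[(δ/π(X))·(1−A)] = τ0`. -/
theorem stmt_14
    {Ω : Type*} [MeasurableSpace Ω] (P : Measure Ω) [IsProbabilityMeasure P]
    {p : ℕ} (X : Ω → (Fin p → ℝ)) (hX : Measurable X)
    (δ A Y : Ω → ℝ)
    (hδ : Measurable δ) (hA : Measurable A) (hY : Measurable Y)
    (hδ01 : ∀ ω, δ ω = 0 ∨ δ ω = 1) (hA01 : ∀ ω, A ω = 0 ∨ A ω = 1)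
    (hYsq : Integrable (fun ω => (Y ω) ^ 2) P)
    (π : (Fin p → ℝ) → ℝ) (hπm : Measurable π)
    (c : ℝ) (hc : 0 < c) (hπlb : ∀ x, c ≤ π x) (hπub : ∀ x, π x ≤ 1)
    (hπver : ∀ h : (Fin p → ℝ) → ℝ, Measurable h → (∃ C, ∀ x, |h x| ≤ C) →
      ∫ ω, δ ω * h (X ω) ∂P = ∫ ω, π (X ω) * h (X ω) ∂P)
    (πA : ℝ) (hπA0 : 0 < πA) (hπA1 : πA < 1)
    (μ0 μ1 : (Fin p → ℝ) → ℝ) (hμ0m : Measurable μ0) (hμ1m : Measurable μ1)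
    (hμ0sq : Integrable (fun ω => (μ0 (X ω)) ^ 2) P)
    (hμ1sq : Integrable (fun ω => (μ1 (X ω)) ^ 2) P)
    (hout1 : ∀ h : (Fin p → ℝ) → ℝ, Measurable h → (∃ C, ∀ x, |h x| ≤ C) →
      ∫ ω, δ ω * A ω * Y ω * h (X ω) ∂P = πA * ∫ ω, δ ω * μ1 (X ω) * h (X ω) ∂P)
    (hout0 : ∀ h : (Fin p → ℝ) → ℝ, Measurable h → (∃ C, ∀ x, |h x| ≤ C) →
      ∫ ω, δ ω * (1 - A ω) * Y ω * h (X ω) ∂P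
        = (1 - πA) * ∫ ω, δ ω * μ0 (X ω) * h (X ω) ∂P)
    (hrand : ∀ h : (Fin p → ℝ) → ℝ, Measurable h → (∃ C, ∀ x, |h x| ≤ C) →
      ∫ ω, δ ω * A ω * h (X ω) ∂P = πA * ∫ ω, δ ω * h (X ω) ∂P) :
    (∫ ω, δ ω / π (X ω) * A ω ∂P = πA) ∧
    (∫ ω, δ ω / π (X ω) * (1 - A ω) ∂P = 1 - πA) ∧
    (0 < ∫ ω, δ ω / π (X ω) * A ω ∂P) ∧
    (0 < ∫ ω, δ ω / π (X ω) * (1 - A ω) ∂P) ∧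
    ((∫ ω, δ ω / π (X ω) * A ω * Y ω ∂P) / (∫ ω, δ ω / π (X ω) * A ω ∂P)
      - (∫ ω, δ ω / π (X ω) * (1 - A ω) * Y ω ∂P)
          / (∫ ω, δ ω / π (X ω) * (1 - A ω) ∂P)
      = ∫ ω, (μ1 (X ω) - μ0 (X ω)) ∂P) := by
  have hπpos : ∀ x, 0 < π x := fun x => lt_of_lt_of_le hc (hπlb x)
  have hπne : ∀ x, π x ≠ 0 := fun x => ne_of_gt (hπpos x)
  have hδb : ∀ ω, |δ ω| ≤ 1 := fun ω => by rcases hδ01 ω with h | h <;> simp [h]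
  have hAb : ∀ ω, |A ω| ≤ 1 := fun ω => by rcases hA01 ω with h | h <;> simp [h]
  have hπb : ∀ x, |π x| ≤ 1 := fun x => by
    rw [abs_of_pos (hπpos x)]; exact hπub x
  -- the bounded weight 1/π
  have hm1 : Measurable (fun x => 1 / π x) := measurable_const.div hπm
  have hb1 : ∃ C, ∀ x, |(1:ℝ) / π x| ≤ C := by
    refine ⟨1 / c, fun x => ?_⟩
    rw [abs_of_pos (one_div_pos.mpr (hπpos x))]
    exact one_div_le_one_div_of_le hc (hπlb x)
  -- E[δ/π] = 1
  have Eπ : ∫ ω, δ ω * (1 / π (X ω)) ∂P = 1 := by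
    rw [hπver _ hm1 hb1]
    have : (fun ω => π (X ω) * (1 / π (X ω))) = fun _ => (1:ℝ) := by
      funext ω; rw [mul_one_div, div_self (hπne _)]
    rw [this]; simp
  -- integrability of bounded measurable things
  have intf : Integrable (fun ω => δ ω * (1 / π (X ω))) P := by
    refine int_of_bdd (hδ.mul (hm1.comp hX)) (1 / c) fun ω => ?_
    rw [abs_mul]
    calc |δ ω| * |1 / π (X ω)| ≤ 1 * (1 / c) := by
          obtain ⟨C, hC⟩ := hb1
          refine mul_le_mul (hδb ω) ?_ (abs_nonneg _) zero_le_one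
          rw [abs_of_pos (one_div_pos.mpr (hπpos _))]
          exact one_div_le_one_div_of_le hc (hπlb _)
      _ = 1 / c := one_mul _
  have intg : Integrable (fun ω => δ ω * A ω * (1 / π (X ω))) P := by
    refine int_of_bdd ((hδ.mul hA).mul (hm1.comp hX)) (1 / c) fun ω => ?_
    rw [abs_mul, abs_mul]
    have h1 : |1 / π (X ω)| ≤ 1 / c := by
      rw [abs_of_pos (one_div_pos.mpr (hπpos _))]
      exact one_div_le_one_div_of_le hc (hπlb _)
    calc |δ ω| * |A ω| * |1 / π (X ω)| ≤ 1 * 1 * (1 / c) := by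
          refine mul_le_mul (mul_le_mul (hδb ω) (hAb ω) (abs_nonneg _) zero_le_one)
            h1 (abs_nonneg _) (by norm_num)
      _ = 1 / c := by ring
  -- denominators
  have D1 : ∫ ω, δ ω / π (X ω) * A ω ∂P = πA := by
    have e : (fun ω => δ ω / π (X ω) * A ω) = fun ω => δ ω * A ω * (1 / π (X ω)) := by
      funext ω; ring
    rw [e, hrand _ hm1 hb1, Eπ, mul_one]
  have D0 : ∫ ω, δ ω / π (X ω) * (1 - A ω) ∂P = 1 - πA := by
    have e : (fun ω => δ ω / π (X ω) * (1 - A ω))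
        = fun ω => δ ω * (1 / π (X ω)) - δ ω * A ω * (1 / π (X ω)) := by
      funext ω; ring
    rw [e, integral_sub intf intg, Eπ, hrand _ hm1 hb1, Eπ, mul_one]
  -- integrability of μa ∘ X and (μa/π) ∘ X
  have habs : ∀ t : ℝ, |t| ≤ 1 + t ^ 2 := fun t => by nlinarith [sq_nonneg (|t| - 1), sq_abs t]
  have key : ∀ (μ : (Fin p → ℝ) → ℝ), Measurable μ →
      Integrable (fun ω => (μ (X ω)) ^ 2) P →
      (Integrable (fun ω => μ (X ω)) P ∧
        ∫ ω, δ ω * (μ (X ω) / π (X ω)) ∂P = ∫ ω, μ (X ω) ∂P) := by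
    intro μ hμm hμsq
    have base : Integrable (fun ω => 1 + (μ (X ω)) ^ 2) P := (integrable_const 1).add hμsq
    have intμ : Integrable (fun ω => μ (X ω)) P := by
      refine base.mono ((hμm.comp hX)).aestronglyMeasurable (ae_of_all _ fun ω => ?_)
      rw [Real.norm_eq_abs, Real.norm_eq_abs,
        abs_of_nonneg (show (0:ℝ) ≤ 1 + (μ (X ω)) ^ 2 by positivity)]
      exact habs _
    have intq : Integrable (fun ω => μ (X ω) / π (X ω)) P := by
      have base' : Integrable (fun ω => (1 / c) * (1 + (μ (X ω)) ^ 2)) P := base.const_mul _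
      refine base'.mono ((hμm.comp hX).div (hπm.comp hX)).aestronglyMeasurable
        (ae_of_all _ fun ω => ?_)
      rw [Real.norm_eq_abs, Real.norm_eq_abs,
        abs_of_nonneg (show (0:ℝ) ≤ 1 / c * (1 + (μ (X ω)) ^ 2) by positivity), abs_div,
        abs_of_pos (hπpos _)]
      calc |μ (X ω)| / π (X ω) ≤ (1 + (μ (X ω)) ^ 2) / c :=
            div_le_div₀ (by positivity) (habs _) hc (hπlb _)
        _ = 1 / c * (1 + (μ (X ω)) ^ 2) := by ring
    have te := trunc_ext P X hX δ hδ hδb π hπm hπb (fun x => μ x / π x)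
      (hμm.div hπm) intq hπver
    have e2 : ∫ ω, π (X ω) * (μ (X ω) / π (X ω)) ∂P = ∫ ω, μ (X ω) ∂P := by
      congr 1; funext ω; rw [mul_comm, div_mul_cancel₀ _ (hπne _)]
    exact ⟨intμ, te.trans e2⟩
  obtain ⟨intμ1, K1⟩ := key μ1 hμ1m hμ1sq
  obtain ⟨intμ0, K0⟩ := key μ0 hμ0m hμ0sq
  -- numerators
  have N1 : ∫ ω, δ ω / π (X ω) * A ω * Y ω ∂P = πA * ∫ ω, μ1 (X ω) ∂P := by
    have e : (fun ω => δ ω / π (X ω) * A ω * Y ω)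
        = fun ω => δ ω * A ω * Y ω * (1 / π (X ω)) := by funext ω; ring
    rw [e, hout1 _ hm1 hb1]
    congr 1
    have e' : (fun ω => δ ω * μ1 (X ω) * (1 / π (X ω)))
        = fun ω => δ ω * (μ1 (X ω) / π (X ω)) := by funext ω; ring
    rw [e', K1]
  have N0 : ∫ ω, δ ω / π (X ω) * (1 - A ω) * Y ω ∂P = (1 - πA) * ∫ ω, μ0 (X ω) ∂P := by
    have e : (fun ω => δ ω / π (X ω) * (1 - A ω) * Y ω)
        = fun ω => δ ω * (1 - A ω) * Y ω * (1 / π (X ω)) := by funext ω; ring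
    rw [e, hout0 _ hm1 hb1]
    congr 1
    have e' : (fun ω => δ ω * μ0 (X ω) * (1 / π (X ω)))
        = fun ω => δ ω * (μ0 (X ω) / π (X ω)) := by funext ω; ring
    rw [e', K0]
  refine ⟨D1, D0, by rw [D1]; exact hπA0, by rw [D0]; linarith, ?_⟩
  rw [D1, D0, N1, N0, mul_div_cancel_left₀ _ (ne_of_gt hπA0),
    mul_div_cancel_left₀ _ (by linarith : (1:ℝ) - πA ≠ 0),
    integral_sub intμ1 intμ0]
end
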